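/- Let σ ∈ (0, 1/2), a > 0 and ξ ∈ (0, π/2). Set b = cos ξ, c = √(a² + b²), and define V(a,b) = 2σ ∫₀^{c-b} [(s² - 2bs + 1)^{-σ-1} + (s² + 2bs + 1)^{-σ-1}] ds. Then there is an absolute constant C > 0 such that V(a, cos ξ) ≤ C · σ / (sin ξ)^{1+2σ}. -/
import Mathlib

open Real intervalIntegral

lemma arctan_int_le (L d T : ℝ) (hL : 0 < L) :
    (∫ s in (0:ℝ)..T, 1 / (1 + ((s - d) / L) ^ 2)) ≤ π * L := by
  have h1 : (∫ s in (0:ℝ)..T, 1 / (1 + ((s - d) / L) ^ 2))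
      = ∫ s in (0 - d)..(T - d), 1 / (1 + (s / L) ^ 2) :=
    intervalIntegral.integral_comp_sub_right (fun s => 1 / (1 + (s / L) ^ 2)) d
  have h2 : (∫ s in (0 - d)..(T - d), 1 / (1 + (s / L) ^ 2))
      = L * ∫ u in ((0 - d) / L)..((T - d) / L), 1 / (1 + u ^ 2) := by
    rw [intervalIntegral.integral_comp_div (a := 0 - d) (b := T - d)
        (fun u => 1 / (1 + u ^ 2)) hL.ne', smul_eq_mul]
  rw [h1, h2, integral_one_div_one_add_sq]
  have hu := arctan_lt_pi_div_two ((T - d) / L)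
  have hv := neg_pi_div_two_lt_arctan ((0 - d) / L)
  nlinarith

lemma ptwise (σ L x : ℝ) (hσ : 0 < σ) (hL : 0 < L) :
    (x ^ 2 + L ^ 2) ^ (-σ - 1) ≤ L ^ (-2 * σ - 2) * (1 / (1 + (x / L) ^ 2)) := by
  have hX : (0:ℝ) < x ^ 2 + L ^ 2 := by positivity
  have hden : 1 + (x / L) ^ 2 = (x ^ 2 + L ^ 2) / L ^ 2 := by
    field_simp; ring
  have hL2 : (L ^ 2 : ℝ) ^ (-σ) = L ^ (-2 * σ) := by
    rw [← Real.rpow_natCast L 2, ← Real.rpow_mul hL.le]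
    norm_num
  have h1 : (x ^ 2 + L ^ 2) ^ (-σ - 1)
      = (x ^ 2 + L ^ 2) ^ (-σ) * (x ^ 2 + L ^ 2) ^ (-1 : ℝ) := by
    rw [← Real.rpow_add hX]; ring_nf
  have h2 : (x ^ 2 + L ^ 2) ^ (-σ) ≤ (L ^ 2) ^ (-σ) :=
    Real.rpow_le_rpow_of_nonpos (by positivity) (by nlinarith) (by linarith)
  have h3 : L ^ (-2 * σ - 2) = L ^ (-2 * σ) * L ^ (-2 : ℝ) := by
    rw [show (-2 * σ - 2 : ℝ) = -2 * σ + (-2) by ring, Real.rpow_add hL]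
  have h4 : L ^ (-2 : ℝ) = (L ^ 2)⁻¹ := by
    rw [show (-2 : ℝ) = -(2:ℕ) by norm_num, Real.rpow_neg hL.le, Real.rpow_natCast]
  rw [h1, Real.rpow_neg_one, h3, h4, hden]
  have hpos : (0:ℝ) < (x ^ 2 + L ^ 2)⁻¹ := by positivity
  have hLσ : (0:ℝ) < L ^ (-2 * σ) := Real.rpow_pos_of_pos hL _
  have : L ^ (-2 * σ) * (L ^ 2)⁻¹ * (1 / ((x ^ 2 + L ^ 2) / L ^ 2))
      = L ^ (-2 * σ) * (x ^ 2 + L ^ 2)⁻¹ := by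
    field_simp
  rw [this]
  rw [hL2] at h2
  exact mul_le_mul_of_nonneg_right h2 hpos.le

set_option maxHeartbeats 1000000 in
theorem V_bound :
    ∃ C : ℝ, 0 < C ∧
      ∀ σ a ξ : ℝ, 0 < σ → σ < 1/2 → 0 < a → 0 < ξ → ξ < π/2 →
        let b := Real.cos ξ
        let c := Real.sqrt (a ^ 2 + b ^ 2)
        2 * σ * ∫ s in (0:ℝ)..(c - b),
            ((s ^ 2 - 2 * b * s + 1) ^ (-σ - 1) + (s ^ 2 + 2 * b * s + 1) ^ (-σ - 1)) ≤
          C * σ / Real.sin ξ ^ (1 + 2 * σ) := by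
  refine ⟨4 * π, by positivity, fun σ a ξ hσ hσ2 ha hξ hξ2 => ?_⟩
  intro b c
  set L := Real.sin ξ with hLdef
  have hL : 0 < L := Real.sin_pos_of_pos_of_lt_pi hξ (by linarith [Real.pi_pos])
  have hb : 0 < b := Real.cos_pos_of_mem_Ioo ⟨by linarith, hξ2⟩
  have hpyth : b ^ 2 + L ^ 2 = 1 := Real.cos_sq_add_sin_sq ξ
  set T := c - b with hTdef
  have hT : 0 ≤ T := by
    have : b ≤ c := by
      rw [show c = Real.sqrt (a ^ 2 + b ^ 2) from rfl]
      calc b = Real.sqrt (b ^ 2) := by rw [Real.sqrt_sq hb.le]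
        _ ≤ Real.sqrt (a ^ 2 + b ^ 2) := Real.sqrt_le_sqrt (by nlinarith)
    linarith
  -- pointwise bound
  have hcontF : Continuous fun s : ℝ =>
      (s ^ 2 - 2 * b * s + 1) ^ (-σ - 1) + (s ^ 2 + 2 * b * s + 1) ^ (-σ - 1) := by
    apply Continuous.add
    · apply Continuous.rpow_const (by continuity)
      intro s
      left
      have : s ^ 2 - 2 * b * s + 1 = (s - b) ^ 2 + L ^ 2 := by linear_combination -hpyth
      rw [this]; positivity
    · apply Continuous.rpow_const (by continuity)
      intro s
      left
      have : s ^ 2 + 2 * b * s + 1 = (s + b) ^ 2 + L ^ 2 := by linear_combination -hpyth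
      rw [this]; positivity
  have hcontG : Continuous fun s : ℝ =>
      L ^ (-2 * σ - 2) * (1 / (1 + ((s - b) / L) ^ 2))
        + L ^ (-2 * σ - 2) * (1 / (1 + ((s + b) / L) ^ 2)) := by
    apply Continuous.add <;>
    · apply Continuous.mul continuous_const
      apply Continuous.div continuous_const (by continuity)
      intro s; positivity
  have step1 : (∫ s in (0:ℝ)..T,
      ((s ^ 2 - 2 * b * s + 1) ^ (-σ - 1) + (s ^ 2 + 2 * b * s + 1) ^ (-σ - 1)))
      ≤ ∫ s in (0:ℝ)..T,
        (L ^ (-2 * σ - 2) * (1 / (1 + ((s - b) / L) ^ 2))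
          + L ^ (-2 * σ - 2) * (1 / (1 + ((s + b) / L) ^ 2))) := by
    apply intervalIntegral.integral_mono_on hT
      (hcontF.intervalIntegrable _ _) (hcontG.intervalIntegrable _ _)
    intro s hs
    have e1 : s ^ 2 - 2 * b * s + 1 = (s - b) ^ 2 + L ^ 2 := by linear_combination -hpyth
    have e2 : s ^ 2 + 2 * b * s + 1 = (s + b) ^ 2 + L ^ 2 := by linear_combination -hpyth
    rw [e1, e2]
    exact add_le_add (ptwise σ L (s - b) hσ hL) (ptwise σ L (s + b) hσ hL)
  have hi1 : IntervalIntegrable (fun s : ℝ => 1 / (1 + ((s - b) / L) ^ 2)) MeasureTheory.volume 0 T := by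
    apply Continuous.intervalIntegrable
    apply Continuous.div continuous_const (by continuity)
    intro s; positivity
  have hi2 : IntervalIntegrable (fun s : ℝ => 1 / (1 + ((s + b) / L) ^ 2)) MeasureTheory.volume 0 T := by
    apply Continuous.intervalIntegrable
    apply Continuous.div continuous_const (by continuity)
    intro s; positivity
  have step2 : (∫ s in (0:ℝ)..T,
      (L ^ (-2 * σ - 2) * (1 / (1 + ((s - b) / L) ^ 2))
        + L ^ (-2 * σ - 2) * (1 / (1 + ((s + b) / L) ^ 2))))
      = L ^ (-2 * σ - 2) * ((∫ s in (0:ℝ)..T, 1 / (1 + ((s - b) / L) ^ 2))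
        + ∫ s in (0:ℝ)..T, 1 / (1 + ((s + b) / L) ^ 2)) := by
    rw [intervalIntegral.integral_add (hi1.const_mul _) (hi2.const_mul _),
      intervalIntegral.integral_const_mul, intervalIntegral.integral_const_mul]
    ring
  have harc1 := arctan_int_le L b T hL
  have harc2 : (∫ s in (0:ℝ)..T, 1 / (1 + ((s + b) / L) ^ 2)) ≤ π * L := by
    have := arctan_int_le L (-b) T hL
    simpa [sub_neg_eq_add] using this
  have hLpow : (0:ℝ) < L ^ (-2 * σ - 2) := Real.rpow_pos_of_pos hL _
  have step3 : (∫ s in (0:ℝ)..T,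
      (L ^ (-2 * σ - 2) * (1 / (1 + ((s - b) / L) ^ 2))
        + L ^ (-2 * σ - 2) * (1 / (1 + ((s + b) / L) ^ 2))))
      ≤ L ^ (-2 * σ - 2) * (2 * π * L) := by
    rw [step2]
    apply mul_le_mul_of_nonneg_left _ hLpow.le
    linarith
  have key : L ^ (-2 * σ - 2) * (2 * π * L) = 2 * π * L ^ (-(1 + 2 * σ)) := by
    have : L ^ (-(1 + 2 * σ)) = L ^ (-2 * σ - 2) * L := by
      rw [show (-(1 + 2 * σ) : ℝ) = (-2 * σ - 2) + 1 by ring, Real.rpow_add_one hL.ne']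
    rw [this]; ring
  have hfin : 2 * σ * ∫ s in (0:ℝ)..T,
      ((s ^ 2 - 2 * b * s + 1) ^ (-σ - 1) + (s ^ 2 + 2 * b * s + 1) ^ (-σ - 1))
      ≤ 2 * σ * (2 * π * L ^ (-(1 + 2 * σ))) := by
    apply mul_le_mul_of_nonneg_left _ (by linarith : (0:ℝ) ≤ 2 * σ)
    calc _ ≤ _ := step1
      _ ≤ L ^ (-2 * σ - 2) * (2 * π * L) := step3
      _ = 2 * π * L ^ (-(1 + 2 * σ)) := key
  refine hfin.trans (le_of_eq ?_)
  rw [Real.rpow_neg hL.le, div_eq_mul_inv]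
  ring
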